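/- arXiv:1407.3254 — 4 statements merged into one kernel-verified Lean document; each statement's English description precedes it below -/
import Mathlib

section
/- Let n ≥ 2 and let a_1, …, a_n be positive real numbers. The diagonal partial n×n matrix diag(a_1, …, a_n) is completable to a rank-one matrix in the standard simplex Δ^{nn−1} if and only if ∑_{i=1}^n √(a_i) ≤ 1. -/
/-!
A rank-one matrix has vanishing `2 × 2` minors, so `M i j * M j i = a i * a j`, and AM–GM gives
`√(a i) * √(a j) ≤ (M i j + M j i) / 2`; summing over `i, j` yields `(∑ √(a i))² ≤ ∑ M i j = 1`.

Conversely, `u vᵀ` with `u = v = √a` has the prescribed diagonal and total mass `s² ≤ 1`, where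
`s = ∑ √(a i)`. Scaling `u i₀` by `t` and `v i₀` by `t⁻¹` keeps the diagonal and changes the mass to
`p² + r² + p r (t + t⁻¹)` with `p = √(a i₀)`, `r = s - p`, which attains every value `≥ (p + r)² = s²`
as soon as `r > 0`, i.e. as soon as `n ≥ 2`.
-/

open Finset

namespace Matrix

variable {m n K : Type*} [Fintype n] [Field K]

theorem mul_mul_eq_of_rank_le_one {A : Matrix m n K} (h : A.rank ≤ 1) (i k : m) (j l : n) :
    A i j * A k l = A i l * A k j := by
  have := Module.Finite.span_of_finite K (Set.finite_range A.col)
  rw [rank_eq_finrank_span_cols, finrank_le_one_iff] at h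
  obtain ⟨w, hw⟩ := h
  have hcol : ∀ j, ∃ c : K, ∀ i, A i j = c * w.1 i := fun j => by
    obtain ⟨c, hc⟩ := hw ⟨A.col j, Submodule.subset_span (Set.mem_range_self j)⟩
    exact ⟨c, fun i => (congrFun (congrArg Subtype.val hc) i).symm⟩
  obtain ⟨cj, hj⟩ := hcol j
  obtain ⟨cl, hl⟩ := hcol l
  rw [hj, hj, hl, hl]
  ring

theorem rank_eq_zero_iff {A : Matrix m n K} : A.rank = 0 ↔ A = 0 := by
  have := Module.Finite.span_of_finite K (Set.finite_range A.col)
  rw [rank_eq_finrank_span_cols, Submodule.finrank_eq_zero, Submodule.span_eq_bot]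
  constructor
  · intro h
    ext i j
    exact congrFun (h _ (Set.mem_range_self j)) i
  · rintro rfl _ ⟨j, rfl⟩
    rfl

theorem rank_vecMulVec_eq_one {u : m → K} {v : n → K} (hu : u ≠ 0) (hv : v ≠ 0) :
    (vecMulVec u v).rank = 1 := by
  refine le_antisymm (rank_vecMulVec_le u v) (Nat.one_le_iff_ne_zero.mpr ?_)
  obtain ⟨i, hi⟩ := Function.ne_iff.mp hu
  obtain ⟨j, hj⟩ := Function.ne_iff.mp hv
  rw [Ne, rank_eq_zero_iff]
  exact fun h => mul_ne_zero hi hj congr($h i j)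

end Matrix

theorem sq_sum_sqrt_diag_le_sum {ι : Type*} [Fintype ι] {M : Matrix ι ι ℝ}
    (hM : ∀ i j, 0 ≤ M i j) (hminor : ∀ i j, M i j * M j i = M i i * M j j) :
    (∑ i, √(M i i)) ^ 2 ≤ ∑ i, ∑ j, M i j := by
  have hamgm : ∀ i j, 2 * (√(M i i) * √(M j j)) ≤ M i j + M j i := fun i j => by
    rw [← Real.sqrt_mul (hM i i), ← hminor, Real.sqrt_mul (hM i j)]
    simpa [Real.sq_sqrt, hM, mul_assoc] using two_mul_le_add_sq √(M i j) √(M j i)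
  have hsym : ∑ i, ∑ j, M j i = ∑ i, ∑ j, M i j := sum_comm
  calc (∑ i, √(M i i)) ^ 2 = ∑ i, ∑ j, √(M i i) * √(M j j) := by rw [sq, sum_mul_sum]
    _ ≤ ∑ i, ∑ j, (M i j + M j i) / 2 := by gcongr with i _ j _; linarith [hamgm i j]
    _ = ∑ i, ∑ j, M i j := by simp only [add_div, sum_add_distrib, ← sum_div, hsym]; ring

theorem Real.exists_pos_add_inv_eq {K : ℝ} (hK : 2 ≤ K) : ∃ t > 0, t + t⁻¹ = K := by
  set D := √(K ^ 2 - 4)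
  have hD : D ^ 2 = K ^ 2 - 4 := Real.sq_sqrt (by nlinarith)
  have ht : 0 < (K + D) / 2 := by positivity
  refine ⟨(K + D) / 2, ht, ?_⟩
  rw [inv_eq_of_mul_eq_one_right (b := K - (K + D) / 2) (by linear_combination (-1 / 4) * hD)]
  ring

theorem exists_pos_mul_add_mul_inv_add_eq {x y c : ℝ} (hx : 0 < x) (hy : 0 < y)
    (hc : (x + y) ^ 2 ≤ c) : ∃ t > 0, (x * t + y) * (x * t⁻¹ + y) = c := by
  have hK : 2 ≤ (c - x ^ 2 - y ^ 2) / (x * y) := by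
    rw [le_div_iff₀ (by positivity)]
    nlinarith
  obtain ⟨t, ht, hsum⟩ := Real.exists_pos_add_inv_eq hK
  refine ⟨t, ht, ?_⟩
  have hexpand : (x * t + y) * (x * t⁻¹ + y) = x ^ 2 + y ^ 2 + x * y * (t + t⁻¹) := by
    field_simp; ring
  rw [hexpand, hsum]
  field_simp
  ring

theorem exists_pos_mul_eq_and_sum_mul_sum_eq {ι : Type*} [Fintype ι] [DecidableEq ι]
    {a : ι → ℝ} (ha : ∀ i, 0 < a i) {i₀ i₁ : ι} (hi : i₀ ≠ i₁) {c : ℝ}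
    (hc : (∑ i, √(a i)) ^ 2 ≤ c) :
    ∃ u v : ι → ℝ, (∀ i, 0 < u i) ∧ (∀ i, 0 < v i) ∧ (∀ i, u i * v i = a i) ∧
      (∑ i, u i) * (∑ i, v i) = c := by
  set x := √(a i₀)
  set y := ∑ i ∈ univ \ {i₀}, √(a i)
  have hx : 0 < x := Real.sqrt_pos.mpr (ha i₀)
  have hy : 0 < y := sum_pos' (fun i _ => Real.sqrt_nonneg _)
    ⟨i₁, by simp [hi.symm], Real.sqrt_pos.mpr (ha i₁)⟩
  have hxy : ∑ i, √(a i) = x + y := sum_eq_add_sum_sdiff_singleton_of_mem (mem_univ i₀) _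
  obtain ⟨t, ht, hprod⟩ := exists_pos_mul_add_mul_inv_add_eq hx hy (hxy ▸ hc)
  refine ⟨Function.update (fun i => √(a i)) i₀ (x * t),
    Function.update (fun i => √(a i)) i₀ (x * t⁻¹), fun i => ?_, fun i => ?_, fun i => ?_, ?_⟩
  · rcases eq_or_ne i i₀ with rfl | h
    · simpa using mul_pos hx ht
    · simpa [h] using ha i
  · rcases eq_or_ne i i₀ with rfl | h
    · simpa using mul_pos hx (inv_pos.mpr ht)
    · simpa [h] using ha i
  · rcases eq_or_ne i i₀ with rfl | h
    · simp only [Function.update_self]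
      rw [mul_mul_mul_comm, mul_inv_cancel₀ ht.ne', mul_one, Real.mul_self_sqrt (ha i).le]
    · simp [h, Real.mul_self_sqrt (ha i).le]
  · rwa [sum_update_of_mem (mem_univ i₀), sum_update_of_mem (mem_univ i₀)]

/-- A diagonal partial `n × n` matrix `diag(a₁,…,aₙ)` with positive entries is completable
to a rank-one matrix in the standard simplex `Δ^{nn-1}` iff `∑ √(aᵢ) ≤ 1`. -/
theorem diagonal_completable_iff (n : ℕ) (hn : 2 ≤ n) (a : Fin n → ℝ)
    (ha : ∀ i, 0 < a i) :
    (∃ M : Matrix (Fin n) (Fin n) ℝ,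
      (∀ i j, 0 ≤ M i j) ∧ (∑ i, ∑ j, M i j = 1) ∧ M.rank = 1 ∧ ∀ i, M i i = a i) ↔
    ∑ i, Real.sqrt (a i) ≤ 1 := by
  constructor
  · rintro ⟨M, hM0, hM1, hMr, hMd⟩
    have hminor i j : M i j * M j i = M i i * M j j := M.mul_mul_eq_of_rank_le_one hMr.le i j j i
    have hsq := sq_sum_sqrt_diag_le_sum hM0 hminor
    simp only [hMd, hM1] at hsq
    exact (sq_le_one_iff₀ (sum_nonneg fun i _ => Real.sqrt_nonneg _)).mp hsq
  · intro hs
    let i₀ : Fin n := ⟨0, by omega⟩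
    have hi : i₀ ≠ ⟨1, hn⟩ := by simp [i₀, Fin.ext_iff]
    obtain ⟨u, v, hu, hv, huv, hsum⟩ := exists_pos_mul_eq_and_sum_mul_sum_eq ha hi (c := 1)
      (pow_le_one₀ (sum_nonneg fun i _ => Real.sqrt_nonneg _) hs)
    refine ⟨Matrix.vecMulVec u v, fun i j => (mul_pos (hu i) (hv j)).le, ?_,
      Matrix.rank_vecMulVec_eq_one (Function.ne_iff.mpr ⟨i₀, (hu i₀).ne'⟩)
        (Function.ne_iff.mpr ⟨i₀, (hv i₀).ne'⟩), huv⟩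
    simp only [Matrix.vecMulVec_apply, ← mul_sum, ← sum_mul, hsum]
end

section
/- Let a, b be nonnegative real numbers. There exists a rank-one matrix in the standard simplex Δ^3 (a 2×2 matrix) whose diagonal entries are a and b if and only if (a + b − 1)² − 4ab ≥ 0 and a + b ≤ 1. -/
lemma aux_rank_ne_zero {M : Matrix (Fin 2) (Fin 2) ℝ} (h : M ≠ 0) : M.rank ≠ 0 := by
  intro h0
  apply h
  rw [Matrix.rank] at h0
  have hr : LinearMap.range M.mulVecLin = ⊥ := Submodule.finrank_eq_zero.mp h0
  rw [LinearMap.range_eq_bot] at hr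
  ext i j
  have := congrFun (LinearMap.congr_fun hr (Pi.single j 1)) i
  simpa [Matrix.mulVecLin_apply, Matrix.mulVec_single] using this

lemma aux_rank_le_one (M : Matrix (Fin 2) (Fin 2) ℝ) (hdet : M.det = 0) :
    M.rank ≤ 1 := by
  rw [Matrix.det_fin_two] at hdet
  have key : ∃ u v : Fin 2 → ℝ, M = Matrix.vecMulVec u v := by
    by_cases hp : M 0 0 ≠ 0
    · refine ⟨![M 0 0, M 1 0], ![1, M 0 1 / M 0 0], ?_⟩
      ext i j
      fin_cases i <;> fin_cases j <;>
        simp [Matrix.vecMulVec_apply] <;> field_simp <;> linarith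
    · push_neg at hp
      by_cases hq : M 0 1 ≠ 0
      · refine ⟨![M 0 1, M 1 1], ![M 0 0 / M 0 1, 1], ?_⟩
        ext i j
        fin_cases i <;> fin_cases j <;>
          simp [Matrix.vecMulVec_apply] <;> field_simp <;> linarith
      · push_neg at hq
        refine ⟨![0, 1], ![M 1 0, M 1 1], ?_⟩
        ext i j
        fin_cases i <;> fin_cases j <;>
          simp [Matrix.vecMulVec_apply, hp, hq]
  obtain ⟨u, v, rfl⟩ := key
  rw [Matrix.vecMulVec_eq (Fin 1)]
  exact (Matrix.rank_mul_le_left _ _).trans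
    ((Matrix.rank_le_card_width _).trans_eq (by simp))

lemma aux_rank_eq_one (M : Matrix (Fin 2) (Fin 2) ℝ) (h : M ≠ 0) (hdet : M.det = 0) :
    M.rank = 1 := by
  have h1 := aux_rank_le_one M hdet
  have h2 := aux_rank_ne_zero h
  omega

/-- A `2 × 2` diagonal partial matrix `diag(a,b)` with nonnegative entries is completable
to a rank-one matrix in the standard simplex `Δ³` iff `(a+b-1)² - 4ab ≥ 0` and `a+b ≤ 1`. -/
theorem two_by_two_diagonal_completable_iff (a b : ℝ) (ha : 0 ≤ a) (hb : 0 ≤ b) :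
    (∃ M : Matrix (Fin 2) (Fin 2) ℝ,
      (∀ i j, 0 ≤ M i j) ∧ (∑ i, ∑ j, M i j = 1) ∧ M.rank = 1 ∧
      M 0 0 = a ∧ M 1 1 = b) ↔
    ((a + b - 1) ^ 2 - 4 * a * b ≥ 0 ∧ a + b ≤ 1) := by
  constructor
  · rintro ⟨M, hpos, hsum, hrank, hMa, hMb⟩
    have hdet : M.det = 0 := by
      by_contra hd
      have hu : IsUnit M := (Matrix.isUnit_iff_isUnit_det M).mpr (isUnit_iff_ne_zero.mpr hd)
      have := Matrix.rank_of_isUnit M hu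
      rw [hrank, Fintype.card_fin] at this
      omega
    rw [Matrix.det_fin_two, hMa, hMb] at hdet
    set x := M 0 1 with hx
    set y := M 1 0 with hy
    have hx0 : 0 ≤ x := hpos 0 1
    have hy0 : 0 ≤ y := hpos 1 0
    have hsum' : a + x + (y + b) = 1 := by
      simpa [Fin.sum_univ_two, hMa, hMb, ← hx, ← hy] using hsum
    constructor
    · nlinarith [sq_nonneg (x - y)]
    · linarith
  · rintro ⟨hD, hab⟩
    set s : ℝ := 1 - a - b with hs
    set r : ℝ := Real.sqrt ((a + b - 1) ^ 2 - 4 * a * b) with hrdef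
    have hr0 : 0 ≤ r := Real.sqrt_nonneg _
    have hr2 : r ^ 2 = (a + b - 1) ^ 2 - 4 * a * b := Real.sq_sqrt hD
    have hs0 : 0 ≤ s := by simp [hs]; linarith
    have hrs : r ≤ s := by nlinarith [mul_nonneg ha hb]
    set x : ℝ := (s + r) / 2 with hxdef
    set y : ℝ := (s - r) / 2 with hydef
    have hx0 : 0 ≤ x := by simp [hxdef]; linarith
    have hy0 : 0 ≤ y := by simp [hydef]; linarith
    have hxy : x * y = a * b := by
      have : x * y = (s ^ 2 - r ^ 2) / 4 := by rw [hxdef, hydef]; ring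
      rw [this, hr2, hs]; ring
    refine ⟨!![a, x; y, b], ?_, ?_, ?_, by simp, by simp⟩
    · intro i j
      fin_cases i <;> fin_cases j <;> simpa using by assumption
    · simp [Fin.sum_univ_two]
      simp [hxdef, hydef, hs]
      ring
    · apply aux_rank_eq_one
      · intro h0
        have := congrFun (congrFun h0 0) 0
        have h1 := congrFun (congrFun h0 0) 1
        have h2 := congrFun (congrFun h0 1) 0
        simp at this h1 h2
        have : x + y = s := by rw [hxdef, hydef]; ring
        -- a = 0, x = 0, y = 0 ⇒ s = 0 ⇒ b = 1, but M 1 1 = b must be 0 too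
        have h3 := congrFun (congrFun h0 1) 1
        simp at h3
        -- from h0 all entries zero, but sum is 1
        nlinarith [this]
      · rw [Matrix.det_fin_two]
        simp
        linarith [hxy]
end

section
/- Let n > 2, let a_1, …, a_n be positive real numbers, and set S = ∑_{i=1}^n √(a_i); assume S < 1. Then the quadratic equation S²(S(√(a_1)+√(a_2)) − S² + 1)·t² − S(S² − 1)(√(a_1) − √(a_2))·t + (S² − 1)√(a_1 a_2) = 0 has two real solutions, both lying in the interval [−√(a_1)/S, √(a_2)/S], and for each such solution t the vector u = (√(a_1)/S + t, √(a_2)/S − t, √(a_3)/S, …, √(a_n)/S) has positive coordinates summing to 1 and satisfies ∑_{i=1}^n a_i/u_i = 1; consequently the n×n matrix with entries m_{ij} = u_i·(a_j/u_j) is a rank-one matrix in the standard simplex Δ^{nn−1} with m_{ii} = a_i for all i. -/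
/-! With `b = √a`, the vector `b / S` sums to 1 and has `∑ aᵢ / uᵢ = S² < 1`. Moving mass `t`
from the second coordinate to the first keeps the sum and changes `∑ aᵢ / uᵢ` in two terms only;
clearing denominators, `∑ aᵢ / uᵢ = 1` becomes the given quadratic. Its leading coefficient is
positive and its constant term negative, so it has two real roots; it is positive at `-√a₁/S` and
at `√a₂/S` but negative at `0`, so both roots lie strictly between these points, which keeps `u`
positive. The matrix `u (a / u)ᵀ` is then an outer product with entry sum `(∑ u)(∑ a / u) = 1`
and diagonal `a`. -/

section Quadratic

variable {A B C : ℝ}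

theorem exists_ne_quadratic_eq_zero (h : A * C < 0) : ∃ t₁ t₂ : ℝ,
    t₁ ≠ t₂ ∧ A * t₁ ^ 2 + B * t₁ + C = 0 ∧ A * t₂ ^ 2 + B * t₂ + C = 0 := by
  have hA : A ≠ 0 := by rintro rfl; simp at h
  have hd : 0 < discrim A B C := by rw [discrim]; nlinarith [sq_nonneg B]
  set s := √(discrim A B C)
  have hs : 0 < s := Real.sqrt_pos.mpr hd
  have hroot := quadratic_eq_zero_iff hA (Real.mul_self_sqrt hd.le).symm
  simp only [← sq] at hroot
  refine ⟨(-B + s) / (2 * A), (-B - s) / (2 * A), ?_, (hroot _).mpr (.inl rfl),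
    (hroot _).mpr (.inr rfl)⟩
  rw [Ne, div_left_inj' (mul_ne_zero two_ne_zero hA)]
  linarith

theorem lt_of_quadratic_eq_zero {p t : ℝ} (hA : 0 ≤ A) (hC : C < 0) (hp : p < 0)
    (hfp : 0 < A * p ^ 2 + B * p + C) (ht : A * t ^ 2 + B * t + C = 0) : p < t := by
  by_contra! htp
  have ht0 : t < 0 := htp.trans_lt hp
  -- convexity: `p` lies between the root `t` and `0`, where the value is `C < 0`
  have key : t * (A * p ^ 2 + B * p + C) = (p - t) * (A * (p * t) - C) := by
    linear_combination p * ht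
  have hrhs : 0 ≤ (p - t) * (A * (p * t) - C) :=
    mul_nonneg (by linarith) (by nlinarith [mul_pos_of_neg_of_neg hp ht0])
  linarith [mul_neg_of_neg_of_pos ht0 hfp]

theorem lt_of_quadratic_eq_zero' {q t : ℝ} (hA : 0 ≤ A) (hC : C < 0) (hq : 0 < q)
    (hfq : 0 < A * q ^ 2 + B * q + C) (ht : A * t ^ 2 + B * t + C = 0) : t < q := by
  have := lt_of_quadratic_eq_zero (B := -B) (p := -q) (t := -t) hA hC (neg_neg_of_pos hq)
    (by linarith) (by linarith)
  linarith

end Quadratic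

-- the quadratic of the statement in `x = √a₁`, `y = √a₂`, where `√(a₁ a₂) = x y`
def completionQuadratic (S x y t : ℝ) : ℝ :=
  S ^ 2 * (S * (x + y) - S ^ 2 + 1) * t ^ 2 - S * (S ^ 2 - 1) * (x - y) * t + (S ^ 2 - 1) * (x * y)

namespace completionQuadratic

variable {S x y t : ℝ}

theorem eq_quadratic :
    completionQuadratic S x y t = S ^ 2 * (S * (x + y) - S ^ 2 + 1) * t ^ 2
      + -(S * (S ^ 2 - 1) * (x - y)) * t + (S ^ 2 - 1) * (x * y) := by
  unfold completionQuadratic; ring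

theorem apply_neg_div (hS : S ≠ 0) :
    completionQuadratic S x y (-(x / S)) = x ^ 2 * (S * (x + y)) := by
  unfold completionQuadratic; field_simp; ring

theorem apply_div (hS : S ≠ 0) : completionQuadratic S x y (y / S) = y ^ 2 * (S * (x + y)) := by
  unfold completionQuadratic; field_simp; ring

theorem sq_div_add_sq_div (hS : S ≠ 0) (hx : x / S + t ≠ 0) (hy : y / S - t ≠ 0)
    (h : completionQuadratic S x y t = 0) :
    x ^ 2 / (x / S + t) + y ^ 2 / (y / S - t) = S * (x + y) + 1 - S ^ 2 := by
  rw [div_add_div _ _ hx hy, div_eq_iff (mul_ne_zero hx hy)]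
  unfold completionQuadratic at h
  field_simp
  linear_combination h

theorem coeff_two_pos (hx : 0 < x) (hy : 0 < y) (hS : 0 < S) (hS1 : S < 1) :
    0 < S ^ 2 * (S * (x + y) - S ^ 2 + 1) := by
  have : S ^ 2 < 1 := by nlinarith
  have : 0 < S * (x + y) := by positivity
  have : 0 < S * (x + y) - S ^ 2 + 1 := by linarith
  positivity

theorem coeff_zero_neg (hx : 0 < x) (hy : 0 < y) (hS : 0 < S) (hS1 : S < 1) :
    (S ^ 2 - 1) * (x * y) < 0 :=
  mul_neg_of_neg_of_pos (by nlinarith) (mul_pos hx hy)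

theorem exists_ne_roots (hx : 0 < x) (hy : 0 < y) (hS : 0 < S) (hS1 : S < 1) :
    ∃ t₁ t₂, t₁ ≠ t₂ ∧
      completionQuadratic S x y t₁ = 0 ∧ completionQuadratic S x y t₂ = 0 := by
  simp only [eq_quadratic]
  exact exists_ne_quadratic_eq_zero
    (mul_neg_of_pos_of_neg (coeff_two_pos hx hy hS hS1) (coeff_zero_neg hx hy hS hS1))

theorem mem_Ioo_of_eq_zero (hx : 0 < x) (hy : 0 < y) (hS : 0 < S) (hS1 : S < 1)
    (h : completionQuadratic S x y t = 0) : t ∈ Set.Ioo (-(x / S)) (y / S) := by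
  have hA := (coeff_two_pos hx hy hS hS1).le
  have hC := coeff_zero_neg hx hy hS hS1
  have hval : 0 < S * (x + y) := by positivity
  rw [eq_quadratic] at h
  refine ⟨lt_of_quadratic_eq_zero hA hC (neg_neg_of_pos (div_pos hx hS)) ?_ h,
    lt_of_quadratic_eq_zero' hA hC (div_pos hy hS) ?_ h⟩
  · rw [← eq_quadratic, apply_neg_div hS.ne']; positivity
  · rw [← eq_quadratic, apply_div hS.ne']; positivity

end completionQuadratic

structure IsShift {ι : Type*} (b u : ι → ℝ) (S t : ℝ) (i j : ι) : Prop where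
  ne : i ≠ j
  apply_left : u i = b i / S + t
  apply_right : u j = b j / S - t
  apply_of_ne : ∀ k, k ≠ i → k ≠ j → u k = b k / S

namespace IsShift

variable {ι : Type*} {b u : ι → ℝ} {S t : ℝ} {i j : ι}

theorem sum_eq_one [Fintype ι] (h : IsShift b u S t i j) (hS : S = ∑ k, b k) (hS0 : S ≠ 0) :
    ∑ k, u k = 1 := by
  have hdiff : ∑ k, (u k - b k / S) = 0 := by
    rw [Fintype.sum_eq_add i j h.ne fun k hk => by rw [h.apply_of_ne k hk.1 hk.2, sub_self],
      h.apply_left, h.apply_right]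
    ring
  rwa [Finset.sum_sub_distrib, ← Finset.sum_div, ← hS, div_self hS0, sub_eq_zero] at hdiff

theorem pos (h : IsShift b u S t i j) (hb : ∀ k, 0 < b k) (hS : 0 < S)
    (ht : t ∈ Set.Ioo (-(b i / S)) (b j / S)) (k : ι) : 0 < u k := by
  by_cases hki : k = i
  · subst hki; rw [h.apply_left]; linarith [ht.1]
  by_cases hkj : k = j
  · subst hkj; rw [h.apply_right]; linarith [ht.2]
  rw [h.apply_of_ne k hki hkj]
  exact div_pos (hb k) hS

theorem sum_sq_div_eq_one [Fintype ι] (h : IsShift b u S t i j) (hS : S = ∑ k, b k)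
    (hS0 : S ≠ 0) (hi : u i ≠ 0) (hj : u j ≠ 0) (hq : completionQuadratic S (b i) (b j) t = 0) :
    ∑ k, b k ^ 2 / u k = 1 := by
  have hdiff : ∑ k, (b k ^ 2 / u k - S * b k)
      = b i ^ 2 / u i - S * b i + (b j ^ 2 / u j - S * b j) := by
    refine Fintype.sum_eq_add i j h.ne fun k hk => ?_
    rw [h.apply_of_ne k hk.1 hk.2, sub_eq_zero]
    rcases eq_or_ne (b k) 0 with hb | hb
    · simp [hb]
    · field_simp
  have hkey :=
    completionQuadratic.sq_div_add_sq_div hS0 (h.apply_left ▸ hi) (h.apply_right ▸ hj) hq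
  rw [← h.apply_left, ← h.apply_right] at hkey
  rw [Finset.sum_sub_distrib, ← Finset.mul_sum, ← hS] at hdiff
  linarith

end IsShift

theorem Matrix.rank_vecMulVec_eq_one_s9 {K m n : Type*} [Field K] [Fintype n] [Fintype m]
    {w : m → K} {v : n → K} (hw : w ≠ 0) (hv : v ≠ 0) : (vecMulVec w v).rank = 1 := by
  classical
  refine le_antisymm (rank_vecMulVec_le w v) (Nat.one_le_iff_ne_zero.mpr fun h => ?_)
  rw [Matrix.rank, Submodule.finrank_eq_zero, LinearMap.range_eq_bot] at h
  have hzero : vecMulVec w v = 0 := Matrix.toLin'.injective (h.trans (map_zero _).symm)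
  obtain ⟨i, hi⟩ := Function.ne_iff.mp hw
  obtain ⟨j, hj⟩ := Function.ne_iff.mp hv
  exact mul_ne_zero hi hj congr($hzero i j)

theorem vecMulVec_div_mem_simplex {ι : Type*} [Fintype ι] {u a : ι → ℝ} (hu : ∀ i, 0 < u i)
    (ha : ∀ i, 0 ≤ a i) (hsum : ∑ i, u i = 1) (hsum' : ∑ i, a i / u i = 1) :
    let M := Matrix.vecMulVec u fun j => a j / u j
    (∀ i j, 0 ≤ M i j) ∧ ∑ i, ∑ j, M i j = 1 ∧ M.rank = 1 ∧ ∀ i, M i i = a i := by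
  have hne : ∀ {f : ι → ℝ}, ∑ i, f i = 1 → f ≠ 0 := by rintro f hf rfl; simp at hf
  refine ⟨fun i j => mul_nonneg (hu i).le (div_nonneg (ha j) (hu j).le), ?_,
    Matrix.rank_vecMulVec_eq_one_s9 (hne hsum) (hne hsum'), fun i => mul_div_cancel₀ _ (hu i).ne'⟩
  simp only [Matrix.vecMulVec_apply, ← Finset.sum_mul_sum, hsum, hsum', one_mul]

/-- For `n > 2`, positive `aᵢ` with `S = ∑ √aᵢ < 1`, the quadratic of
Proposition `thm:easycompletion` has two real roots, both in
`[-√a₁/S, √a₂/S]`, and each root `t` gives a vector `u` with positive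
coordinates summing to 1, with `∑ aᵢ/uᵢ = 1`, and hence a rank-one
completion `(uᵢ · aⱼ/uⱼ)` in the standard simplex with diagonal `a`. -/
theorem easy_completion (n : ℕ) (hn : 2 < n) (a : Fin n → ℝ) (ha : ∀ i, 0 < a i)
    (S : ℝ) (hS : S = ∑ i, Real.sqrt (a i)) (hSlt : S < 1) :
    (∃ t₁ t₂ : ℝ, t₁ ≠ t₂ ∧
      (S ^ 2 * (S * (Real.sqrt (a ⟨0, by omega⟩) + Real.sqrt (a ⟨1, by omega⟩)) - S ^ 2 + 1) * t₁ ^ 2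
        - S * (S ^ 2 - 1) * (Real.sqrt (a ⟨0, by omega⟩) - Real.sqrt (a ⟨1, by omega⟩)) * t₁
        + (S ^ 2 - 1) * Real.sqrt (a ⟨0, by omega⟩ * a ⟨1, by omega⟩) = 0) ∧
      (S ^ 2 * (S * (Real.sqrt (a ⟨0, by omega⟩) + Real.sqrt (a ⟨1, by omega⟩)) - S ^ 2 + 1) * t₂ ^ 2
        - S * (S ^ 2 - 1) * (Real.sqrt (a ⟨0, by omega⟩) - Real.sqrt (a ⟨1, by omega⟩)) * t₂
        + (S ^ 2 - 1) * Real.sqrt (a ⟨0, by omega⟩ * a ⟨1, by omega⟩) = 0)) ∧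
    (∀ t : ℝ,
      (S ^ 2 * (S * (Real.sqrt (a ⟨0, by omega⟩) + Real.sqrt (a ⟨1, by omega⟩)) - S ^ 2 + 1) * t ^ 2
        - S * (S ^ 2 - 1) * (Real.sqrt (a ⟨0, by omega⟩) - Real.sqrt (a ⟨1, by omega⟩)) * t
        + (S ^ 2 - 1) * Real.sqrt (a ⟨0, by omega⟩ * a ⟨1, by omega⟩) = 0) →
      t ∈ Set.Icc (-(Real.sqrt (a ⟨0, by omega⟩) / S)) (Real.sqrt (a ⟨1, by omega⟩) / S) ∧
      ∀ u : Fin n → ℝ,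
        (u = fun i : Fin n =>
          if (i : ℕ) = 0 then Real.sqrt (a i) / S + t
          else if (i : ℕ) = 1 then Real.sqrt (a i) / S - t
          else Real.sqrt (a i) / S) →
        ((∀ i, 0 < u i) ∧ (∑ i, u i = 1) ∧ (∑ i, a i / u i = 1) ∧
          (∀ M : Matrix (Fin n) (Fin n) ℝ, (M = Matrix.of fun i j => u i * (a j / u j)) →
            (∀ i j, 0 ≤ M i j) ∧ (∑ i, ∑ j, M i j = 1) ∧ M.rank = 1 ∧ ∀ i, M i i = a i))) := by
  set i₀ : Fin n := ⟨0, by omega⟩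
  set i₁ : Fin n := ⟨1, by omega⟩
  have hb : ∀ i, 0 < √(a i) := fun i => Real.sqrt_pos.mpr (ha i)
  have hS0 : 0 < S := hS ▸ Finset.sum_pos (fun i _ => hb i) ⟨i₀, Finset.mem_univ _⟩
  have hq : ∀ t, S ^ 2 * (S * (√(a i₀) + √(a i₁)) - S ^ 2 + 1) * t ^ 2
      - S * (S ^ 2 - 1) * (√(a i₀) - √(a i₁)) * t + (S ^ 2 - 1) * √(a i₀ * a i₁)
      = completionQuadratic S (√(a i₀)) (√(a i₁)) t := fun t => by
    rw [Real.sqrt_mul (ha i₀).le]; rfl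
  simp only [hq]
  refine ⟨completionQuadratic.exists_ne_roots (hb i₀) (hb i₁) hS0 hSlt, fun t ht => ?_⟩
  have ht' := completionQuadratic.mem_Ioo_of_eq_zero (hb i₀) (hb i₁) hS0 hSlt ht
  refine ⟨Set.Ioo_subset_Icc_self ht', fun u hu => ?_⟩
  have hshift : IsShift (fun i => √(a i)) u S t i₀ i₁ :=
    { ne := by simp [i₀, i₁, Fin.ext_iff]
      apply_left := by simp [hu, i₀]
      apply_right := by simp [hu, i₁]
      apply_of_ne := fun k hk₀ hk₁ => by simp_all [i₀, i₁, Fin.ext_iff] }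
  have hpos := hshift.pos hb hS0 ht'
  have hsum' : ∑ i, a i / u i = 1 := by
    simpa only [Real.sq_sqrt (ha _).le] using
      hshift.sum_sq_div_eq_one hS hS0.ne' (hpos i₀).ne' (hpos i₁).ne' ht
  have hsum := hshift.sum_eq_one hS hS0.ne'
  exact ⟨hpos, hsum, hsum', fun M hM =>
    hM ▸ vecMulVec_div_mem_simplex hpos (fun i => (ha i).le) hsum hsum'⟩
end

section
/- Let s ≥ 2, let [m] = R_1 ⊔ ⋯ ⊔ R_s and [n] = C_1 ⊔ ⋯ ⊔ C_s be partitions into nonempty parts, and let S = ⋃_{k=1}^s (R_k × C_k). Let M be a partial matrix subordinate to S with all specified entries positive such that for each k the submatrix (m_{ij})_{(i,j) ∈ R_k×C_k} has rank one, and set b_k = ∑_{(i,j) ∈ R_k×C_k} m_{ij}. Then M is completable to a rank-one matrix in the standard simplex Δ^{mn−1} if and only if ∑_{k=1}^s √(b_k) ≤ 1. -/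
/-!
A nonnegative matrix of rank at most one and total mass one is the outer product of its row sums
and its column sums. So if `M` completes the pattern, the `k`-th block has sum `bₖ = aₖ cₖ`, where
`aₖ`, `cₖ` are the masses of `Rₖ` and `Cₖ` in the row and column sums, and Cauchy–Schwarz gives
`∑ √bₖ ≤ √(∑ aₖ) √(∑ cₖ) = 1`.

Conversely, a positive rank-one block equals (its row sums) ⊗ (its column sums) / `bₖ`. Rescaling
block `k` by `uₖ` on its rows and by `1 / uₖ` on its columns glues the blocks into one outer
product of total mass `(∑ uₖ) (∑ bₖ / uₖ)`. This is at least `(∑ √bₖ)²`, and with two or more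
blocks it takes every larger value, in particular `1`.
-/

open Finset Function

namespace Matrix

variable {m n K : Type*} [Fintype n] [Field K]

theorem mul_mul_eq_mul_mul_of_rank_le_one {A : Matrix m n K} (h : A.rank ≤ 1)
    (i i' : m) (j j' : n) : A i j * A i' j' = A i j' * A i' j := by
  by_contra hne
  have hunit : IsUnit (A.submatrix ![i, i'] ![j, j']) := by
    rw [isUnit_iff_isUnit_det, det_fin_two, isUnit_iff_ne_zero, sub_ne_zero]
    simpa using hne
  have := A.rank_submatrix_le ![i, i'] ![j, j']
  rw [rank_of_isUnit _ hunit, Fintype.card_fin] at this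
  omega

theorem one_le_rank_of_apply_ne_zero {A : Matrix m n K} {i : m} {j : n} (h : A i j ≠ 0) :
    1 ≤ A.rank := by
  have hunit : IsUnit (A.submatrix (fun _ : Unit => i) (fun _ : Unit => j)) := by
    rwa [isUnit_iff_isUnit_det, det_unique, isUnit_iff_ne_zero]
  simpa [rank_of_isUnit _ hunit] using A.rank_submatrix_le (fun _ : Unit => i) fun _ : Unit => j

theorem rank_vecMulVec_eq_one_s16 {x : m → K} {y : n → K} {i : m} {j : n} (hx : x i ≠ 0)
    (hy : y j ≠ 0) : (vecMulVec x y).rank = 1 :=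
  (rank_vecMulVec_le x y).antisymm <| one_le_rank_of_apply_ne_zero (i := i) (j := j) <| by
    simpa [vecMulVec_apply] using mul_ne_zero hx hy

theorem apply_mul_sum_eq_of_rank_le_one [Fintype m] {A : Matrix m n K} (h : A.rank ≤ 1)
    (i : m) (j : n) : A i j * ∑ i', ∑ j', A i' j' = (∑ j', A i j') * ∑ i', A i' j := by
  rw [Finset.mul_sum, sum_mul_sum, sum_comm]
  exact sum_congr rfl fun i' _ => by
    rw [Finset.mul_sum]
    exact sum_congr rfl fun j' _ => mul_mul_eq_mul_mul_of_rank_le_one h i i' j j'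

theorem block_apply_mul_sum_eq_of_rank_le_one {α β : Type*} {R : Finset α} {C : Finset β}
    {f : α → β → K} (h : (of fun (i : R) (j : C) => f i j).rank ≤ 1) {i : α} {j : β} (hi : i ∈ R) (hj : j ∈ C) :
    f i j * ∑ i' ∈ R, ∑ j' ∈ C, f i' j' = (∑ j' ∈ C, f i j') * ∑ i' ∈ R, f i' j := by
  have := apply_mul_sum_eq_of_rank_le_one h ⟨i, hi⟩ ⟨j, hj⟩
  simp only [of_apply, univ_eq_attach, sum_attach] at this
  rwa [sum_attach R fun a => ∑ j' ∈ C, f a j', sum_attach R fun a => f a j] at this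

end Matrix

section Partition

variable {ι α : Type*} {R : ι → Finset α}

theorem exists_index_of_partition (hdisj : Pairwise (Disjoint on R))
    (hcover : ∀ a, ∃ k, a ∈ R k) : ∃ κ : α → ι, ∀ a k, a ∈ R k ↔ κ a = k := by
  choose κ hκ using hcover
  refine ⟨κ, fun a k => ⟨fun ha => ?_, fun h => h ▸ hκ a⟩⟩
  by_contra hne
  exact disjoint_left.mp (hdisj hne) (hκ a) ha

theorem sum_sum_eq_sum_of_index [Fintype ι] [Fintype α] {M : Type*} [AddCommMonoid M]
    {κ : α → ι} (hκ : ∀ a k, a ∈ R k ↔ κ a = k) (g : ι → α → M) :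
    ∑ k, ∑ a ∈ R k, g k a = ∑ a, g (κ a) a := by
  classical
  have hR : ∀ k, R k = ({a | κ a = k} : Finset α) := fun k => by ext a; simp [hκ]
  calc ∑ k, ∑ a ∈ R k, g k a = ∑ k, ∑ a with κ a = k, g (κ a) a :=
        sum_congr rfl fun k _ => sum_congr (hR k) fun a ha => by rw [(mem_filter.1 ha).2]
    _ = ∑ a, g (κ a) a := sum_fiberwise univ κ _

end Partition

theorem exists_add_inv_eq {K : ℝ} (hK : 2 ≤ K) : ∃ r > 0, r + r⁻¹ = K := by
  have hd : 0 ≤ K ^ 2 - 4 := by nlinarith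
  have hsq := Real.sq_sqrt hd
  have hlt : √(K ^ 2 - 4) < K := by nlinarith [Real.sqrt_nonneg (K ^ 2 - 4)]
  refine ⟨(K + √(K ^ 2 - 4)) / 2, by positivity, ?_⟩
  have hinv : ((K + √(K ^ 2 - 4)) / 2)⁻¹ = (K - √(K ^ 2 - 4)) / 2 :=
    inv_eq_of_mul_eq_one_right (by nlinarith)
  rw [hinv]; ring

theorem exists_pos_sum_mul_sum_div_eq_one {ι : Type*} [Fintype ι] [Nontrivial ι] {b : ι → ℝ}
    (hb : ∀ k, 0 < b k) (h : ∑ k, √(b k) ≤ 1) :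
    ∃ u : ι → ℝ, (∀ k, 0 < u k) ∧ (∑ k, u k) * ∑ k, b k / u k = 1 := by
  classical
  obtain ⟨k₀, k₁, hk⟩ := exists_pair_ne ι
  set w := √(b k₀)
  set S := ∑ k ∈ univ.erase k₀, √(b k)
  have hw : 0 < w := Real.sqrt_pos.2 (hb k₀)
  have hS : 0 < S :=
    sum_pos (fun k _ => Real.sqrt_pos.2 (hb k)) ⟨k₁, mem_erase.2 ⟨hk.symm, mem_univ _⟩⟩
  have hwS : w + S ≤ 1 := by rwa [← add_sum_erase _ _ (mem_univ k₀)] at h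
  -- keep `uₖ = √bₖ` except at `k₀`, where `uₖ₀ = r w`; the product becomes
  -- `w² + S² + w S (r + r⁻¹)`, which equals `1` for a suitable `r` because `(w + S)² ≤ 1`
  obtain ⟨r, hr, hrK⟩ := exists_add_inv_eq (K := (1 - w ^ 2 - S ^ 2) / (w * S)) <| by
    rw [le_div_iff₀ (by positivity)]; nlinarith
  refine ⟨fun k => if k = k₀ then r * w else √(b k), fun k => ?_, ?_⟩
  · dsimp only; split_ifs
    exacts [mul_pos hr hw, Real.sqrt_pos.2 (hb k)]
  rw [← add_sum_erase _ _ (mem_univ k₀), ← add_sum_erase _ _ (mem_univ k₀)]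
  have hrest : ∑ k ∈ univ.erase k₀, b k / (if k = k₀ then r * w else √(b k)) = S :=
    sum_congr rfl fun k hk => by rw [if_neg (ne_of_mem_erase hk), Real.div_sqrt]
  have hrest' : ∑ k ∈ univ.erase k₀, (if k = k₀ then r * w else √(b k)) = S :=
    sum_congr rfl fun k hk => by rw [if_neg (ne_of_mem_erase hk)]
  have hb₀ : b k₀ = w ^ 2 := (Real.sq_sqrt (hb k₀).le).symm
  simp only [hrest, hrest', if_pos, hb₀]
  rw [eq_div_iff (by positivity)] at hrK
  rw [show w ^ 2 / (r * w) = w * r⁻¹ by field_simp]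
  linear_combination hrK + w ^ 2 * mul_inv_cancel₀ hr.ne'

section Blocks

variable {ι α β : Type*} [Fintype ι] [Fintype α] [Fintype β]
  {R : ι → Finset α} {C : ι → Finset β} {κR : α → ι} {κC : β → ι}

theorem sum_sqrt_block_sum_le_one (hκR : ∀ i k, i ∈ R k ↔ κR i = k)
    (hκC : ∀ j k, j ∈ C k ↔ κC j = k) {M : Matrix α β ℝ} (hM₀ : ∀ i j, 0 ≤ M i j)
    (hM₁ : ∑ i, ∑ j, M i j = 1) (hM : M.rank ≤ 1) :
    ∑ k, √(∑ i ∈ R k, ∑ j ∈ C k, M i j) ≤ 1 := by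
  have hMrc : ∀ i j, M i j = (∑ j', M i j') * ∑ i', M i' j := fun i j => by
    simpa [hM₁] using M.apply_mul_sum_eq_of_rank_le_one hM i j
  have hM₁' : ∑ j, ∑ i, M i j = 1 := by rwa [sum_comm]
  set r : α → ℝ := fun i => ∑ j, M i j
  set c : β → ℝ := fun j => ∑ i, M i j
  have hr : ∀ i, 0 ≤ r i := fun i => sum_nonneg fun j _ => hM₀ i j
  have hc : ∀ j, 0 ≤ c j := fun j => sum_nonneg fun i _ => hM₀ i j
  calc ∑ k, √(∑ i ∈ R k, ∑ j ∈ C k, M i j)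
      = ∑ k, √(∑ i ∈ R k, r i) * √(∑ j ∈ C k, c j) := sum_congr rfl fun k _ => by
        rw [← Real.sqrt_mul (sum_nonneg fun i _ => hr i), sum_mul_sum]
        exact congrArg _ (sum_congr rfl fun i _ => sum_congr rfl fun j _ => hMrc i j)
    _ ≤ √(∑ k, ∑ i ∈ R k, r i) * √(∑ k, ∑ j ∈ C k, c j) :=
        Real.sum_sqrt_mul_sqrt_le _ (fun k => sum_nonneg fun i _ => hr i)
          fun k => sum_nonneg fun j _ => hc j
    _ = 1 := by
        rw [sum_sum_eq_sum_of_index hκR fun _ => r, sum_sum_eq_sum_of_index hκC fun _ => c]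
        rw [hM₁, hM₁', Real.sqrt_one, one_mul]

theorem exists_pos_vecMulVec_eq_on_blocks [Nontrivial ι] (hκR : ∀ i k, i ∈ R k ↔ κR i = k)
    (hκC : ∀ j k, j ∈ C k ↔ κC j = k) (hRne : ∀ k, (R k).Nonempty)
    (hCne : ∀ k, (C k).Nonempty)
    {f : α → β → ℝ} (hpos : ∀ k, ∀ i ∈ R k, ∀ j ∈ C k, 0 < f i j)
    (hrank : ∀ k, (Matrix.of fun (i : R k) (j : C k) => f i j).rank ≤ 1)
    (hsum : ∑ k, √(∑ i ∈ R k, ∑ j ∈ C k, f i j) ≤ 1) :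
    ∃ x : α → ℝ, ∃ y : β → ℝ, (∀ i, 0 < x i) ∧ (∀ j, 0 < y j) ∧
      (∑ i, x i) * (∑ j, y j) = 1 ∧ ∀ k, ∀ i ∈ R k, ∀ j ∈ C k, x i * y j = f i j := by
  set rowSum : ι → α → ℝ := fun k i => ∑ j ∈ C k, f i j
  set colSum : ι → β → ℝ := fun k j => ∑ i ∈ R k, f i j
  set b : ι → ℝ := fun k => ∑ i ∈ R k, rowSum k i
  have hrow : ∀ i, 0 < rowSum (κR i) i := fun i =>
    sum_pos (fun j hj => hpos _ i ((hκR i _).2 rfl) j hj) (hCne _)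
  have hcol : ∀ j, 0 < colSum (κC j) j := fun j =>
    sum_pos (fun i hi => hpos _ i hi j ((hκC j _).2 rfl)) (hRne _)
  have hb : ∀ k, 0 < b k := fun k => sum_pos
    (fun i hi => sum_pos (fun j hj => hpos k i hi j hj) (hCne k)) (hRne k)
  obtain ⟨u, hu, hu₁⟩ := exists_pos_sum_mul_sum_div_eq_one hb hsum
  refine ⟨fun i => u (κR i) * rowSum (κR i) i / b (κR i), fun j => colSum (κC j) j / u (κC j),
    fun i => by have := hu (κR i); have := hb (κR i); have := hrow i; positivity,
    fun j => by have := hu (κC j); have := hcol j; positivity, ?_, fun k i hi j hj => ?_⟩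
  · rw [← sum_sum_eq_sum_of_index hκR fun k i => u k * rowSum k i / b k,
      ← sum_sum_eq_sum_of_index hκC fun k j => colSum k j / u k, ← hu₁]
    congr 1
    · exact sum_congr rfl fun k _ => by
        rw [← sum_div, ← mul_sum, mul_div_cancel_right₀ _ (hb k).ne']
    · exact sum_congr rfl fun k _ => by rw [← sum_div, sum_comm]
  · have := Matrix.block_apply_mul_sum_eq_of_rank_le_one (hrank k) hi hj
    simp only [(hκR i k).1 hi, (hκC j k).1 hj]
    have := hu k; have := hb k
    field_simp
    linarith

end Blocks

/-- A block-diagonal partial matrix with positive rank-one blocks, with block sums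
`bₖ`, is completable to a rank-one matrix in the standard simplex iff `∑ √bₖ ≤ 1`. -/
theorem block_diagonal_completable_iff (m n s : ℕ) (hs : 2 ≤ s)
    (R : Fin s → Finset (Fin m)) (C : Fin s → Finset (Fin n))
    (hRne : ∀ k, (R k).Nonempty) (hCne : ∀ k, (C k).Nonempty)
    (hRdisj : ∀ k l, k ≠ l → Disjoint (R k) (R l))
    (hCdisj : ∀ k l, k ≠ l → Disjoint (C k) (C l))
    (hRcover : ∀ i, ∃ k, i ∈ R k) (hCcover : ∀ j, ∃ k, j ∈ C k)
    (f : Fin m → Fin n → ℝ)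
    (hpos : ∀ k, ∀ i ∈ R k, ∀ j ∈ C k, 0 < f i j)
    (hrank : ∀ k, Matrix.rank
      (Matrix.of fun (i : ↥(R k)) (j : ↥(C k)) => f (i : Fin m) (j : Fin n)) = 1) :
    (∃ M : Matrix (Fin m) (Fin n) ℝ,
      (∀ i j, 0 ≤ M i j) ∧ (∑ i, ∑ j, M i j = 1) ∧ M.rank = 1 ∧
      ∀ k, ∀ i ∈ R k, ∀ j ∈ C k, M i j = f i j) ↔
    ∑ k, Real.sqrt (∑ i ∈ R k, ∑ j ∈ C k, f i j) ≤ 1 := by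
  have : Nontrivial (Fin s) := Fin.nontrivial_iff_two_le.2 hs
  obtain ⟨κR, hκR⟩ := exists_index_of_partition (fun k l => hRdisj k l) hRcover
  obtain ⟨κC, hκC⟩ := exists_index_of_partition (fun k l => hCdisj k l) hCcover
  constructor
  · rintro ⟨M, hM₀, hM₁, hM, hMf⟩
    calc ∑ k, √(∑ i ∈ R k, ∑ j ∈ C k, f i j) = ∑ k, √(∑ i ∈ R k, ∑ j ∈ C k, M i j) :=
          sum_congr rfl fun k _ => by
            rw [sum_congr rfl fun i hi => sum_congr rfl fun j hj => hMf k i hi j hj]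
      _ ≤ 1 := sum_sqrt_block_sum_le_one hκR hκC hM₀ hM₁ hM.le
  · intro hsum
    obtain ⟨x, y, hx, hy, hxy, hf⟩ :=
      exists_pos_vecMulVec_eq_on_blocks hκR hκC hRne hCne hpos (fun k => (hrank k).le) hsum
    obtain ⟨i₀, -⟩ := hRne ⟨0, by omega⟩
    obtain ⟨j₀, -⟩ := hCne ⟨0, by omega⟩
    refine ⟨Matrix.vecMulVec x y, fun i j => (mul_pos (hx i) (hy j)).le, ?_,
      Matrix.rank_vecMulVec_eq_one_s16 (hx i₀).ne' (hy j₀).ne', hf⟩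
    simpa only [Matrix.vecMulVec_apply, sum_mul_sum] using hxy
end
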